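/- Let P ⊆ R^d be a nonempty polytope and F a nonempty face of P. Then dim(F) + dim(C_P(F)) = d. -/

import Mathlib

open Set Pointwise

noncomputable section

/-- Dot product of two vectors in `Fin n → ℝ`. -/
def dotp {n : ℕ} (c x : Fin n → ℝ) : ℝ := ∑ i, c i * x i

/-- Dimension of a subset of `Fin n → ℝ` (dimension of its affine hull). -/
def sdim {n : ℕ} (S : Set (Fin n → ℝ)) : ℕ := Module.finrank ℝ (vectorSpan ℝ S)

/-- A polytope is the convex hull of a finite set. -/
def IsPolytope {n : ℕ} (P : Set (Fin n → ℝ)) : Prop :=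
  ∃ S : Finset (Fin n → ℝ), P = convexHull ℝ (S : Set (Fin n → ℝ))

/-- The set of maximizers of the linear functional `dotp c` over `P`. -/
def maxFace {n : ℕ} (P : Set (Fin n → ℝ)) (c : Fin n → ℝ) : Set (Fin n → ℝ) :=
  {x ∈ P | ∀ y ∈ P, dotp c y ≤ dotp c x}

/-- `F` is a (nonempty, possibly improper) face of the polytope `P`: the set of
maximizers of some linear functional over `P`. -/
def IsFaceOf {n : ℕ} (P F : Set (Fin n → ℝ)) : Prop := ∃ c, F = maxFace P c

/-- The optimality cone of a face `F` of `P`: the set of `c` whose set of maximizers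
over `P` is exactly `F`. -/
def optCone {n : ℕ} (P F : Set (Fin n → ℝ)) : Set (Fin n → ℝ) := {c | maxFace P c = F}

/-- A facet: a nonempty face of codimension 1. -/
def IsFacetOf {n : ℕ} (P F : Set (Fin n → ℝ)) : Prop :=
  IsFaceOf P F ∧ F.Nonempty ∧ sdim F + 1 = sdim P

/-- Embedding of a subset of `Fin d → ℝ` at height `α` in `Fin (d+1) → ℝ`. -/
def cay {d : ℕ} (α : ℝ) (S : Set (Fin d → ℝ)) : Set (Fin (d + 1) → ℝ) :=
  (fun x => Fin.snoc x α) '' S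

/-- Orthogonal projection onto the first `d` coordinates. -/
def projd {d m : ℕ} (x : Fin (d + m) → ℝ) : Fin d → ℝ := fun i => x (Fin.castAdd m i)

/-- Width of a set in direction `c`. -/
def width {n : ℕ} (S : Set (Fin n → ℝ)) (c : Fin n → ℝ) : ℝ :=
  sSup (dotp c '' S) - sInf (dotp c '' S)

/-- `P'` is an `ε`-approximation of `P`. -/
def EpsApprox {n : ℕ} (ε : ℝ) (P P' : Set (Fin n → ℝ)) : Prop :=
  P ⊆ P' ∧ ∀ c, width P' c ≤ (1 + ε) * width P c

/-- Binary entropy function (with the convention `0 · log₂ 0 = 0`, which holds for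
`Real.logb` since `Real.logb 2 0 = 0`). -/
def binEnt (p : ℝ) : ℝ := -(p * Real.logb 2 p) - (1 - p) * Real.logb 2 (1 - p)

/-! Write `F = maxFace P c` and let `L` be the direction space of `F`. The claim is that the
optimality cone spans exactly the annihilator `L⁰` of `L` for the dot product; then
`dim L + dim L⁰ = d`. Every `c'` in the cone is constant on `F`, so differences of such `c'`
lie in `L⁰`. Conversely, by Krein–Milman a face of `P = conv S` is the convex hull of the
points of the finite set `S` it contains, so it only depends on which points of `S` maximize
`c`. For `u ∈ L⁰` and small `ε ≠ 0`, the functional `c + ε u` keeps every strict inequality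
between values of `c` on `S` and is constant on the maximizers, so it exposes the same face;
hence `u = ε⁻¹ ((c + ε u) - c)` lies in the span of the cone. -/

open Matrix Filter Topology

lemma dotp_eq_dotProduct {n : ℕ} (c x : Fin n → ℝ) : dotp c x = c ⬝ᵥ x := rfl

section DotAnnihilator

variable {K ι : Type*} [Field K] [Fintype ι] [DecidableEq ι]

def dotAnnihilator (W : Submodule K (ι → K)) : Submodule K (ι → K) :=
  W.dualAnnihilator.comap (dotProductEquiv K ι).toLinearMap

lemma mem_dotAnnihilator {W : Submodule K (ι → K)} {u : ι → K} :
    u ∈ dotAnnihilator W ↔ ∀ v ∈ W, u ⬝ᵥ v = 0 := by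
  simp [dotAnnihilator, Submodule.mem_dualAnnihilator]

lemma finrank_add_finrank_dotAnnihilator (W : Submodule K (ι → K)) :
    Module.finrank K W + Module.finrank K (dotAnnihilator W) = Fintype.card ι := by
  rw [dotAnnihilator, Submodule.comap_equiv_eq_map_symm, LinearEquiv.finrank_map_eq,
    Subspace.finrank_add_finrank_dualAnnihilator_eq, Module.finrank_fintype_fun_eq_card]

end DotAnnihilator

section MaxFace

variable {n : ℕ}

lemma dotp_add_smul (c u x : Fin n → ℝ) (ε : ℝ) :
    dotp (c + ε • u) x = dotp c x + ε * dotp u x := by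
  simp only [dotp_eq_dotProduct, add_dotProduct, smul_dotProduct, smul_eq_mul]

lemma dotp_eq_of_mem_maxFace {P : Set (Fin n → ℝ)} {c x y : Fin n → ℝ}
    (hx : x ∈ maxFace P c) (hy : y ∈ maxFace P c) : dotp c x = dotp c y :=
  le_antisymm (hy.2 x hx.1) (hx.2 y hy.1)

lemma mem_dotAnnihilator_vectorSpan_maxFace (P : Set (Fin n → ℝ)) (c : Fin n → ℝ) :
    c ∈ dotAnnihilator (vectorSpan ℝ (maxFace P c)) := by
  have hker : vectorSpan ℝ (maxFace P c) ≤ LinearMap.ker (dotProductEquiv ℝ (Fin n) c) := by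
    rw [vectorSpan_def, Submodule.span_le]
    rintro _ ⟨x, hx, y, hy, rfl⟩
    simp [dotProduct_sub, ← dotp_eq_dotProduct, dotp_eq_of_mem_maxFace hx hy]
  exact mem_dotAnnihilator.2 fun v hv => hker hv

lemma vectorSpan_optCone_le (P F : Set (Fin n → ℝ)) :
    vectorSpan ℝ (optCone P F) ≤ dotAnnihilator (vectorSpan ℝ F) := by
  have hcone : optCone P F ⊆ dotAnnihilator (vectorSpan ℝ F) := by
    rintro c rfl
    exact mem_dotAnnihilator_vectorSpan_maxFace P c
  rw [vectorSpan_def, Submodule.span_le]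
  rintro _ ⟨c, hc, c', hc', rfl⟩
  exact sub_mem (hcone hc) (hcone hc')

lemma convexOn_dotp (c : Fin n → ℝ) : ConvexOn ℝ univ (dotp c) :=
  (dotProductEquiv ℝ (Fin n) c).convexOn convex_univ

lemma concaveOn_dotp (c : Fin n → ℝ) : ConcaveOn ℝ univ (dotp c) :=
  (dotProductEquiv ℝ (Fin n) c).concaveOn convex_univ

lemma isExposed_maxFace (P : Set (Fin n → ℝ)) (c : Fin n → ℝ) :
    IsExposed ℝ P (maxFace P c) :=
  fun _ => ⟨LinearMap.toContinuousLinearMap (dotProductEquiv ℝ (Fin n) c), rfl⟩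

lemma convexHull_maxFace_subset (S : Set (Fin n → ℝ)) (c : Fin n → ℝ) :
    convexHull ℝ (maxFace S c) ⊆ maxFace (convexHull ℝ S) c := by
  intro y hy
  refine ⟨convexHull_mono (sep_subset _ _) hy, fun z hz => ?_⟩
  obtain ⟨s, hs, hzs⟩ := (convexOn_dotp c).exists_ge_of_mem_convexHull (subset_univ _) hz
  obtain ⟨t, ht, hty⟩ := (concaveOn_dotp c).exists_le_of_mem_convexHull (subset_univ _) hy
  exact hzs.trans ((ht.2 s hs).trans hty)

lemma maxFace_convexHull {S : Set (Fin n → ℝ)} (hS : S.Finite) (c : Fin n → ℝ) :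
    maxFace (convexHull ℝ S) c = convexHull ℝ (maxFace S c) := by
  refine Subset.antisymm ?_ (convexHull_maxFace_subset S c)
  have hexp := isExposed_maxFace (convexHull ℝ S) c
  have hext : (maxFace (convexHull ℝ S) c).extremePoints ℝ ⊆ maxFace S c := fun x hx =>
    have hxS : x ∈ S := extremePoints_convexHull_subset
      (hexp.isExtreme.extremePoints_subset_extremePoints hx)
    ⟨hxS, fun y hy => hx.1.2 y (subset_convexHull ℝ S hy)⟩
  calc maxFace (convexHull ℝ S) c
      = closure (convexHull ℝ ((maxFace (convexHull ℝ S) c).extremePoints ℝ)) :=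
        (closure_convexHull_extremePoints (hexp.isCompact (hS.isCompact_convexHull ℝ))
          (hexp.convex (convex_convexHull ℝ S))).symm
    _ ⊆ closure (convexHull ℝ (maxFace S c)) := closure_mono (convexHull_mono hext)
    _ = convexHull ℝ (maxFace S c) :=
        ((hS.subset (sep_subset _ _)).isCompact_convexHull ℝ).isClosed.closure_eq

lemma maxFace_eq_of_lt_imp_lt {S : Set (Fin n → ℝ)} {c c' : Fin n → ℝ}
    (hlt : ∀ s ∈ S, ∀ t ∈ S, dotp c s < dotp c t → dotp c' s < dotp c' t)
    (hconst : ∀ s ∈ maxFace S c, ∀ t ∈ maxFace S c, dotp c' s = dotp c' t) :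
    maxFace S c' = maxFace S c := by
  ext s
  refine ⟨fun hs => ⟨hs.1, fun t ht => ?_⟩, fun hs => ⟨hs.1, fun t ht => ?_⟩⟩
  · by_contra! h
    exact (hlt s hs.1 t ht h).not_ge (hs.2 t ht)
  · rcases (hs.2 t ht).lt_or_eq with h | h
    · exact (hlt t ht s hs.1 h).le
    · have htmax : t ∈ maxFace S c := ⟨ht, fun y hy => h ▸ hs.2 y hy⟩
      exact (hconst t htmax s hs).le

lemma eventually_maxFace_add_smul {S : Set (Fin n → ℝ)} (hS : S.Finite) {c u : Fin n → ℝ}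
    (hu : ∀ s ∈ maxFace S c, ∀ t ∈ maxFace S c, dotp u s = dotp u t) :
    ∀ᶠ ε in 𝓝 (0 : ℝ), maxFace S (c + ε • u) = maxFace S c := by
  have hcont (x : Fin n → ℝ) : Continuous fun ε : ℝ => dotp (c + ε • u) x := by
    simp only [dotp_add_smul]
    fun_prop
  have hlt (s t : Fin n → ℝ) :
      ∀ᶠ ε in 𝓝 (0 : ℝ), dotp c s < dotp c t → dotp (c + ε • u) s < dotp (c + ε • u) t :=
    eventually_imp_distrib_left.2 <|
      ((hcont s).tendsto' 0 _ (by simp)).eventually_lt ((hcont t).tendsto' 0 _ (by simp))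
  have hall := (eventually_all_finite hS).2 fun s _ => (eventually_all_finite hS).2 fun t _ =>
    hlt s t
  filter_upwards [hall] with ε hε
  refine maxFace_eq_of_lt_imp_lt hε fun s hs t ht => ?_
  rw [dotp_add_smul, dotp_add_smul, dotp_eq_of_mem_maxFace hs ht, hu s hs t ht]

lemma exists_ne_zero_maxFace_add_smul_eq {P : Set (Fin n → ℝ)} (hP : IsPolytope P)
    {c u : Fin n → ℝ} (hu : u ∈ dotAnnihilator (vectorSpan ℝ (maxFace P c))) :
    ∃ ε : ℝ, ε ≠ 0 ∧ maxFace P (c + ε • u) = maxFace P c := by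
  obtain ⟨S, rfl⟩ := hP
  have hS : (S : Set (Fin n → ℝ)).Finite := S.finite_toSet
  have hconst : ∀ s ∈ maxFace (S : Set (Fin n → ℝ)) c, ∀ t ∈ maxFace (S : Set (Fin n → ℝ)) c,
      dotp u s = dotp u t := by
    have hsub : maxFace (S : Set (Fin n → ℝ)) c ⊆ maxFace (convexHull ℝ S) c := by
      rw [maxFace_convexHull hS]
      exact subset_convexHull ℝ _
    intro s hs t ht
    have hst := mem_dotAnnihilator.1 hu (s -ᵥ t) (vsub_mem_vectorSpan ℝ (hsub hs) (hsub ht))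
    rwa [vsub_eq_sub, dotProduct_sub, sub_eq_zero] at hst
  obtain ⟨ε, hε, hε0⟩ :=
    ((eventually_maxFace_add_smul hS hconst).filter_mono nhdsWithin_le_nhds |>.and
      self_mem_nhdsWithin).exists (f := 𝓝[≠] (0 : ℝ))
  exact ⟨ε, hε0, by rw [maxFace_convexHull hS, maxFace_convexHull hS, hε]⟩

lemma vectorSpan_optCone_maxFace {P : Set (Fin n → ℝ)} (hP : IsPolytope P) (c : Fin n → ℝ) :
    vectorSpan ℝ (optCone P (maxFace P c)) = dotAnnihilator (vectorSpan ℝ (maxFace P c)) := by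
  refine (vectorSpan_optCone_le P _).antisymm fun u hu => ?_
  obtain ⟨ε, hε0, hε⟩ := exists_ne_zero_maxFace_add_smul_eq hP hu
  have hmem : (c + ε • u) -ᵥ c ∈ vectorSpan ℝ (optCone P (maxFace P c)) :=
    vsub_mem_vectorSpan ℝ (show maxFace P (c + ε • u) = maxFace P c from hε) rfl
  rwa [vsub_eq_sub, add_sub_cancel_left, Submodule.smul_mem_iff _ hε0] at hmem

end MaxFace

theorem dim_face_add_dim_optCone_general (d : ℕ) (P : Set (Fin d → ℝ))
    (hP : IsPolytope P)
    (F : Set (Fin d → ℝ)) (hF : IsFaceOf P F) :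
    sdim F + sdim (optCone P F) = d := by
  obtain ⟨c, rfl⟩ := hF
  rw [sdim, sdim, vectorSpan_optCone_maxFace hP, finrank_add_finrank_dotAnnihilator,
    Fintype.card_fin]

/-- For a nonempty face `F` of a nonempty polytope `P ⊆ ℝ^d`, the dimension of `F`
plus the dimension of its optimality cone equals `d`. -/
theorem dim_face_add_dim_optCone (d : ℕ) (P : Set (Fin d → ℝ))
    (hP : IsPolytope P) (hne : P.Nonempty)
    (F : Set (Fin d → ℝ)) (hF : IsFaceOf P F) (hFne : F.Nonempty) :
    sdim F + sdim (optCone P F) = d :=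
  dim_face_add_dim_optCone_general d P hP F hF
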